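/- Let k ≥ 7 and ℓ ≥ 10^7·k^6 be integers such that k is the minimal integer greater than 2 that does not divide ℓ. Suppose H is an oriented graph which contains a directed path of length at most 64k from any vertex to any other vertex. If for some odd s < k the underlying undirected graph of H contains a cycle of length s (i.e. H contains some orientation of a cycle of length s), then H contains a closed directed walk of length ℓ. -/

import Mathlib

/-- Out-degree of `v` in the digraph with edge relation `E`. -/
noncomputable def OutDeg {V : Type} (E : V → V → Prop) (v : V) : ℕ := {w | E v w}.ncard

/-- In-degree of `v` in the digraph with edge relation `E`. -/
noncomputable def InDeg {V : Type} (E : V → V → Prop) (v : V) : ℕ := {w | E w v}.ncard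

/-- `E` is an oriented graph: no loops and no pair of vertices joined in both directions. -/
def IsOriented {V : Type} (E : V → V → Prop) : Prop :=
  (∀ v, ¬ E v v) ∧ ∀ u v, E u v → ¬ E v u

/-- There is a closed directed walk of length `l`. -/
def HasClosedDirWalk {V : Type} (E : V → V → Prop) (l : ℕ) : Prop :=
  ∃ f : ℕ → V, f l = f 0 ∧ ∀ i < l, E (f i) (f (i + 1))

/-- There is a directed cycle of length `s` (a closed directed walk with distinct vertices). -/
def HasDirCycle {V : Type} (E : V → V → Prop) (s : ℕ) : Prop :=
  3 ≤ s ∧ ∃ f : ℕ → V, f s = f 0 ∧ (∀ i < s, E (f i) (f (i + 1))) ∧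
    Set.InjOn f (Set.Iio s)

/-- There is a directed path of length `m` from `x` to `y`. -/
def HasDirPath {V : Type} (E : V → V → Prop) (x y : V) (m : ℕ) : Prop :=
  ∃ f : ℕ → V, f 0 = x ∧ f m = y ∧ (∀ i < m, E (f i) (f (i + 1))) ∧
    Set.InjOn f (Set.Iic m)

/-- There is a closed walk (in the underlying graph) of length `a + b` with exactly `a`
edges oriented in the direction of traversal and exactly `b` against it. -/
def HasMixedClosedWalk {V : Type} (E : V → V → Prop) (a b : ℕ) : Prop :=
  ∃ f : ℕ → V, f (a + b) = f 0 ∧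
    (∀ i < a + b, E (f i) (f (i + 1)) ∨ E (f (i + 1)) (f i)) ∧
    {i : ℕ | i < a + b ∧ E (f i) (f (i + 1))}.ncard = a ∧
    {i : ℕ | i < a + b ∧ E (f (i + 1)) (f i)}.ncard = b

/-!
Walk once around the given closed walk of odd length `s` in the underlying graph. A step along
an edge `x → y` is the edge itself and closes up into a directed loop at `x` using a return path
`y ⇝ x`; a step against an edge `y → x` is a directed path `x ⇝ y`, closed up by that edge. Each
step thus has length `w ≡ ±1` modulo the length `c` of its loop. Inserting copies of the loops and
of the whole tour `N = ∑ w` produces closed directed walks of every length `y N + ∑ (xᵢ cᵢ + wᵢ)`.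
The gcd of `N` and the `cᵢ` divides the sum of the signs, an odd number of absolute value at most
`s`, hence divides `ℓ`; a Frobenius-type bound with explicit quadratic threshold then represents
`ℓ` in this form.
-/

open Finset

def HasDirWalk {V : Type} (E : V → V → Prop) (x y : V) (n : ℕ) : Prop :=
  ∃ f : ℕ → V, f 0 = x ∧ f n = y ∧ ∀ i < n, E (f i) (f (i + 1))

namespace HasDirWalk

variable {V : Type} {E : V → V → Prop}

theorem refl (x : V) : HasDirWalk E x x 0 :=
  ⟨fun _ => x, rfl, rfl, fun _ hi => absurd hi (Nat.not_lt_zero _)⟩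

theorem single {x y : V} (h : E x y) : HasDirWalk E x y 1 :=
  ⟨fun i => if i = 0 then x else y, rfl, rfl, fun i hi => by
    obtain rfl : i = 0 := by omega
    simpa using h⟩

theorem trans {x y z : V} {n m : ℕ} (h₁ : HasDirWalk E x y n) (h₂ : HasDirWalk E y z m) :
    HasDirWalk E x z (n + m) := by
  obtain ⟨f, rfl, rfl, hf⟩ := h₁
  obtain ⟨g, hg0, rfl, hg⟩ := h₂
  refine ⟨fun i => if i ≤ n then f i else g (i - n), by simp, ?_, fun i hi => ?_⟩
  · rcases Nat.eq_zero_or_pos m with rfl | hm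
    · simp [hg0]
    · simp [show ¬ n + m ≤ n by omega]
  · rcases lt_trichotomy i n with hin | rfl | hin
    · simpa [hin.le, Nat.succ_le_of_lt hin] using hf i hin
    · simpa [hg0] using hg 0 (by omega)
    · simpa [show ¬ i ≤ n by omega, show ¬ i < n by omega, show i + 1 - n = i - n + 1 by omega]
        using hg (i - n) (by omega)

theorem mul {x : V} {n : ℕ} (h : HasDirWalk E x x n) : ∀ t : ℕ, HasDirWalk E x x (t * n)
  | 0 => by simpa using refl x
  | t + 1 => by simpa [Nat.succ_mul] using (h.mul t).trans h

theorem sum_range (f : ℕ → V) (d : ℕ → ℕ) :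
    ∀ s : ℕ, (∀ i < s, HasDirWalk E (f i) (f (i + 1)) (d i)) →
      HasDirWalk E (f 0) (f s) (∑ i ∈ range s, d i)
  | 0, _ => by simpa using refl (f 0)
  | s + 1, h => by
    simpa [sum_range_succ] using
      (sum_range f d s fun i hi => h i (by omega)).trans (h s (by omega))

theorem hasClosedDirWalk {x : V} {n : ℕ} (h : HasDirWalk E x x n) : HasClosedDirWalk E n :=
  let ⟨f, hf0, hfn, hf⟩ := h
  ⟨f, hfn.trans hf0.symm, hf⟩

end HasDirWalk

theorem HasDirPath.hasDirWalk {V : Type} {E : V → V → Prop} {x y : V} {m : ℕ}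
    (h : HasDirPath E x y m) : HasDirWalk E x y m :=
  let ⟨f, hf0, hfm, hf, _⟩ := h
  ⟨f, hf0, hfm, hf⟩

theorem exists_dirWalks_of_adj_or_adj {V : Type} {E : V → V → Prop} {D : ℕ}
    (reach : ∀ x y : V, ∃ m ≤ D, HasDirWalk E x y m) {x y : V} (hxy : E x y ∨ E y x) :
    ∃ (w c : ℕ) (ε : ℤ), (ε = 1 ∨ ε = -1) ∧ (c : ℤ) ∣ w - ε ∧
      HasDirWalk E x y w ∧ HasDirWalk E x x c ∧ w ≤ D + 1 ∧ c ≤ D + 1 := by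
  rcases hxy with hxy | hyx
  · obtain ⟨m, hm, hyx⟩ := reach y x
    exact ⟨1, 1 + m, 1, Or.inl rfl, by simp, .single hxy, (HasDirWalk.single hxy).trans hyx,
      by omega, by omega⟩
  · obtain ⟨m, hm, hxy⟩ := reach x y
    exact ⟨m, m + 1, -1, Or.inr rfl, by simp, hxy, hxy.trans (.single hyx), by omega, by omega⟩

theorem exists_eq_mul_add_of_gcd_dvd {a g S n : ℕ} (hgS : g ∣ S) (hg : g ≤ S)
    (hdvd : Nat.gcd a g ∣ n) (hn : (S + a) ^ 2 ≤ n) : ∃ y m, n = y * a + m ∧ g ∣ m ∧ S ^ 2 ≤ m := by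
  have hgS2 : g ∣ S ^ 2 := hgS.trans (Dvd.intro_left _ (sq S).symm)
  have hbound : a.pred * g.pred ≤ n - S ^ 2 := by
    have : a.pred * g.pred ≤ a * S := Nat.mul_le_mul (Nat.pred_le a) ((Nat.pred_le g).trans hg)
    have : a * S + S ^ 2 ≤ (S + a) ^ 2 := by nlinarith
    omega
  obtain ⟨y, b, hyb⟩ := Nat.exists_add_mul_eq_of_gcd_dvd_of_mul_pred_le a g (n - S ^ 2)
    (Nat.dvd_sub hdvd ((Nat.gcd_dvd_right a g).trans hgS2)) hbound
  have : S ^ 2 ≤ n := le_trans (Nat.pow_le_pow_left (Nat.le_add_right S a) 2) hn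
  exact ⟨y, b * g + S ^ 2, by omega, dvd_add (dvd_mul_left g b) hgS2, Nat.le_add_left _ _⟩

theorem gcd_le_sum {ι : Type} (s : Finset ι) (c : ι → ℕ) : s.gcd c ≤ ∑ i ∈ s, c i := by
  rcases Nat.eq_zero_or_pos (∑ i ∈ s, c i) with hS | hS
  · rw [hS, Nat.le_zero, Finset.gcd_eq_zero_iff]
    exact sum_eq_zero_iff.mp hS
  · exact Nat.le_of_dvd hS (dvd_sum fun i hi => gcd_dvd hi)

theorem exists_eq_sum_mul_of_gcd_dvd {ι : Type} [DecidableEq ι] (s : Finset ι) (c : ι → ℕ)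
    {n : ℕ} (hdvd : s.gcd c ∣ n) (hn : (∑ i ∈ s, c i) ^ 2 ≤ n) :
    ∃ x : ι → ℕ, n = ∑ i ∈ s, x i * c i := by
  induction s using Finset.induction_on generalizing n with
  | empty => exact ⟨0, by simpa using hdvd⟩
  | insert j s hj ih =>
    rw [gcd_insert] at hdvd
    rw [sum_insert hj, add_comm] at hn
    obtain ⟨y, m, rfl, hgm, hm⟩ := exists_eq_mul_add_of_gcd_dvd
      (dvd_sum fun i hi => gcd_dvd hi) (gcd_le_sum s c) hdvd hn
    obtain ⟨x, rfl⟩ := ih hgm hm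
    refine ⟨Function.update x j y, ?_⟩
    rw [sum_insert hj, Function.update_self]
    congr 1
    exact sum_congr rfl fun i hi => by rw [Function.update_of_ne (ne_of_mem_of_not_mem hi hj)]

theorem natAbs_sum_range_mod_two_eq_and_le {ε : ℕ → ℤ} :
    ∀ s : ℕ, (∀ i < s, ε i = 1 ∨ ε i = -1) →
      (∑ i ∈ range s, ε i).natAbs % 2 = s % 2 ∧ (∑ i ∈ range s, ε i).natAbs ≤ s
  | 0, _ => by simp
  | s + 1, h => by
    have ih := natAbs_sum_range_mod_two_eq_and_le s fun i hi => h i (by omega)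
    have := h s (by omega)
    rw [sum_range_succ]
    omega

theorem gcd_sum_gcd_dvd_sum {s : ℕ} (w c : ℕ → ℕ) (ε : ℕ → ℤ)
    (h : ∀ i < s, (c i : ℤ) ∣ w i - ε i) :
    ((Nat.gcd (∑ i ∈ range s, w i) ((range s).gcd c) : ℕ) : ℤ) ∣ ∑ i ∈ range s, ε i := by
  set G := Nat.gcd (∑ i ∈ range s, w i) ((range s).gcd c)
  have hw : (G : ℤ) ∣ ∑ i ∈ range s, (w i : ℤ) := by
    exact_mod_cast Nat.gcd_dvd_left _ _
  have hwε : (G : ℤ) ∣ ∑ i ∈ range s, ((w i : ℤ) - ε i) := dvd_sum fun i hi =>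
    (Int.natCast_dvd_natCast.mpr ((Nat.gcd_dvd_right _ _).trans (gcd_dvd hi))).trans
      (h i (mem_range.mp hi))
  simpa [sum_sub_distrib] using dvd_sub hw hwε

theorem hasClosedDirWalk_of_odd_undirected_closed_walk {V : Type} {E : V → V → Prop} {D s n : ℕ}
    (reach : ∀ x y : V, ∃ m ≤ D, HasDirWalk E x y m) (f : ℕ → V) (hfs : f s = f 0)
    (hf : ∀ i < s, E (f i) (f (i + 1)) ∨ E (f (i + 1)) (f i)) (hs : Odd s)
    (hdiv : ∀ m, Odd m → m ≤ s → m ∣ n) (hn : (2 * s * (D + 1)) ^ 2 + s * (D + 1) ≤ n) :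
    HasClosedDirWalk E n := by
  choose! w c ε hε hcw hw hc hwD hcD using fun i (hi : i < s) =>
    exists_dirWalks_of_adj_or_adj reach (hf i hi)
  set N := ∑ i ∈ range s, w i
  set g := (range s).gcd c
  have hGn : Nat.gcd N g ∣ n := by
    obtain ⟨hεmod, hεabs⟩ := natAbs_sum_range_mod_two_eq_and_le s hε
    have hodd : Odd (∑ i ∈ range s, ε i).natAbs :=
      Nat.odd_iff.mpr (hεmod.trans (Nat.odd_iff.mp hs))
    have hG := Int.natCast_dvd.mp (gcd_sum_gcd_dvd_sum w c ε hcw)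
    exact hdiv _ (hodd.of_dvd_nat hG) ((Nat.le_of_dvd hodd.pos hG).trans hεabs)
  have hN : N ≤ s * (D + 1) := by
    simpa using sum_le_card_nsmul (range s) w (D + 1) fun i hi => hwD i (mem_range.mp hi)
  have hS : ∑ i ∈ range s, c i ≤ s * (D + 1) := by
    simpa using sum_le_card_nsmul (range s) c (D + 1) fun i hi => hcD i (mem_range.mp hi)
  have hbound : (∑ i ∈ range s, c i + N) ^ 2 ≤ n - N := by
    have : (∑ i ∈ range s, c i + N) ^ 2 ≤ (2 * s * (D + 1)) ^ 2 :=
      Nat.pow_le_pow_left (by linarith) 2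
    omega
  obtain ⟨y, m, hym, hgm, hm⟩ := exists_eq_mul_add_of_gcd_dvd (dvd_sum fun i hi => gcd_dvd hi)
    (gcd_le_sum _ c) (Nat.dvd_sub hGn (Nat.gcd_dvd_left N g)) hbound
  obtain ⟨x, rfl⟩ := exists_eq_sum_mul_of_gcd_dvd (range s) c hgm hm
  have hcycle : HasDirWalk E (f 0) (f 0) N := by
    simpa [hfs] using HasDirWalk.sum_range f w s hw
  have htour : HasDirWalk E (f 0) (f 0) (∑ i ∈ range s, (x i * c i + w i)) := by
    simpa [hfs] using HasDirWalk.sum_range f _ s fun i hi => ((hc i hi).mul (x i)).trans (hw i hi)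
  convert ((hcycle.mul y).trans htour).hasClosedDirWalk using 1
  rw [sum_add_distrib]
  omega

theorem stmt_9_general (k l : ℕ) (hk : 7 ≤ k) (hl : 10 ^ 7 * k ^ 6 ≤ l)
    (hmin : ∀ m : ℕ, 2 < m → m < k → m ∣ l)
    (V : Type) (E : V → V → Prop)
    (hpath : ∀ x y : V, x ≠ y → ∃ m ≤ 64 * k, HasDirPath E x y m)
    (s : ℕ) (hodd : Odd s) (hsk : s < k)
    (hcyc : ∃ f : ℕ → V, f s = f 0 ∧ Set.InjOn f (Set.Iio s) ∧
      ∀ i < s, E (f i) (f (i + 1)) ∨ E (f (i + 1)) (f i)) :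
    HasClosedDirWalk E l := by
  obtain ⟨f, hfs, -, hf⟩ := hcyc
  have reach (x y : V) : ∃ m ≤ 64 * k, HasDirWalk E x y m := by
    by_cases hxy : x = y
    · exact ⟨0, Nat.zero_le _, hxy ▸ .refl x⟩
    · obtain ⟨m, hm, hp⟩ := hpath x y hxy
      exact ⟨m, hm, hp.hasDirWalk⟩
  have hdiv (m : ℕ) (hm : Odd m) (hms : m ≤ s) : m ∣ l := by
    obtain ⟨j, rfl⟩ := hm
    rcases Nat.eq_zero_or_pos j with rfl | hj
    · exact one_dvd l
    · exact hmin _ (by omega) (by omega)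
  have hsD : s * (64 * k + 1) ≤ 65 * k ^ 2 := by nlinarith
  have hk2 : k ^ 2 ≤ k ^ 4 := Nat.pow_le_pow_right (by omega) (by omega)
  have hk4 : k ^ 4 ≤ k ^ 6 := Nat.pow_le_pow_right (by omega) (by omega)
  refine hasClosedDirWalk_of_odd_undirected_closed_walk reach f hfs hf hodd hdiv ?_
  calc (2 * s * (64 * k + 1)) ^ 2 + s * (64 * k + 1)
      ≤ (130 * k ^ 2) ^ 2 + 65 * k ^ 2 := by
        rw [mul_assoc]
        exact Nat.add_le_add (Nat.pow_le_pow_left (by omega) 2) hsD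
    _ ≤ 10 ^ 7 * k ^ 6 := by nlinarith
    _ ≤ l := hl

/-- Corollary 2.7: with `k, ℓ` as in (*), suppose `H` is an oriented graph containing a
directed path of length at most `64k` from any vertex to any other vertex. If for some odd
`s < k` the underlying undirected graph of `H` contains a cycle of length `s`, then `H`
contains a closed directed walk of length `ℓ`. -/
theorem stmt_9 (k l : ℕ) (hk : 7 ≤ k) (hl : 10 ^ 7 * k ^ 6 ≤ l)
    (hknd : ¬ k ∣ l) (hmin : ∀ m : ℕ, 2 < m → m < k → m ∣ l)
    (V : Type) (E : V → V → Prop) (hE : IsOriented E)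
    (hpath : ∀ x y : V, x ≠ y → ∃ m ≤ 64 * k, HasDirPath E x y m)
    (s : ℕ) (hs3 : 3 ≤ s) (hodd : Odd s) (hsk : s < k)
    (hcyc : ∃ f : ℕ → V, f s = f 0 ∧ Set.InjOn f (Set.Iio s) ∧
      ∀ i < s, E (f i) (f (i + 1)) ∨ E (f (i + 1)) (f i)) :
    HasClosedDirWalk E l :=
  stmt_9_general k l hk hl hmin V E hpath s hodd hsk hcyc
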